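/- Let $p$ be an odd prime and $r = 2s + t + u$. If $v = (g,\gamma,\delta)$ is a basis element of $\mathcal B_{(2sp,tp,up)}$ fixed under the action of $R_r = \langle\sigma_1\cdots\sigma_r\rangle$, then the number of nontrivial $\widehat{R_r}$-orbits contained in the support $\mathcal S(v)$ of the involution $g$ is even. -/

import Mathlib

/-!
Commuting with the rotation and with the bar map, `g` permutes the blocks `{j} × Fin p × Bool`
and so induces an involution `blockMap g` of `Fin r`. A block fixed by `blockMap g` is fixed
pointwise by `g`: if `g ((j, 0), false) = ((j, c), b)`, equivariance gives
`g ((j, c), b) = ((j, 2c), false)`, so `2c = 0` and `c = 0` as `p` is odd, and then `b = false`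
because `g` moves no point to its bar. Hence the blocks in the support of `g` are exactly the
points moved by the involution `blockMap g`, and these come in pairs.
-/

def barPerm (α : Type*) : Equiv.Perm (α × Bool) :=
  Function.Involutive.toPerm (fun x => (x.1, !x.2)) (by intro x; simp)

def rotBlocks (r p : ℕ) : Equiv.Perm ((Fin r × Fin p) × Bool) :=
  Equiv.prodCongr (Equiv.prodCongr (Equiv.refl (Fin r)) (finRotate p)) (Equiv.refl Bool)

open Equiv Function Finset

@[simp]
lemma barPerm_apply {α : Type*} (x : α) (b : Bool) : barPerm α (x, b) = (x, !b) := rfl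

lemma apply_true_eq_barPerm_apply {α : Type*} {g : Perm (α × Bool)}
    (hbar : Commute g (barPerm α)) (x : α) : g (x, true) = barPerm α (g (x, false)) := by
  rw [← Perm.mul_apply, ← hbar.eq]
  rfl

open Fin.NatCast in
lemma rotBlocks_pow_apply {r p : ℕ} [NeZero p] (k : ℕ) (j : Fin r) (i : Fin p) (b : Bool) :
    (rotBlocks r p ^ k) ((j, i), b) = ((j, i + k), b) := by
  induction k with
  | zero => simp
  | succ k ih =>
    rw [pow_succ', Perm.mul_apply, ih]
    simp [rotBlocks, add_assoc]

lemma Fin.eq_zero_of_add_self_eq_zero {p : ℕ} [NeZero p] (hp : Odd p) {c : Fin p}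
    (h : c + c = 0) : c = 0 := by
  have hdvd : p ∣ 2 * c.val := by
    rw [two_mul, Nat.dvd_iff_mod_eq_zero, ← Fin.val_add, h, Fin.val_zero]
  have hc : p ∣ c.val := (Nat.coprime_two_right.2 hp).dvd_of_dvd_mul_left hdvd
  exact Fin.ext (Nat.eq_zero_of_dvd_of_lt hc c.isLt)

lemma Function.Involutive.even_card_filter_ne {α : Type*} [Fintype α] [DecidableEq α]
    {f : α → α} (hf : Involutive f) : Even #{x | f x ≠ x} := by
  have hsq : hf.toPerm ^ 2 = 1 := by ext x; simp [sq, hf x]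
  exact even_iff_two_dvd.2 (Perm.two_dvd_card_support hsq)

section blocks

variable {r p : ℕ} [NeZero p] {g : Perm ((Fin r × Fin p) × Bool)}

def blockMap (g : Perm ((Fin r × Fin p) × Bool)) (j : Fin r) : Fin r :=
  (g ((j, 0), false)).1.1

lemma apply_eq_rotBlocks_pow (hrot : Commute g (rotBlocks r p)) (j : Fin r) (i : Fin p)
    (b : Bool) : g ((j, i), b) = (rotBlocks r p ^ (i : ℕ)) (g ((j, 0), b)) := by
  have hshift := rotBlocks_pow_apply (i : ℕ) j (0 : Fin p) b
  rw [zero_add, Fin.cast_val_eq_self] at hshift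
  rw [← hshift, ← Perm.mul_apply, (hrot.pow_right _).eq, Perm.mul_apply]

lemma apply_fst_fst_eq_blockMap (hbar : Commute g (barPerm (Fin r × Fin p)))
    (hrot : Commute g (rotBlocks r p)) (j : Fin r) (i : Fin p) (b : Bool) :
    (g ((j, i), b)).1.1 = blockMap g j := by
  have hfalse : ∀ i : Fin p, (g ((j, i), false)).1.1 = blockMap g j := by
    intro i
    rw [apply_eq_rotBlocks_pow hrot, rotBlocks_pow_apply]
    rfl
  cases b
  · exact hfalse i
  · rw [apply_true_eq_barPerm_apply hbar]
    exact hfalse i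

lemma blockMap_involutive (hbar : Commute g (barPerm (Fin r × Fin p)))
    (hrot : Commute g (rotBlocks r p)) (hinv : Involutive g) : Involutive (blockMap g) := by
  intro j
  obtain ⟨⟨⟨j', c⟩, b⟩, hy⟩ : ∃ y, g ((j, 0), false) = y := ⟨_, rfl⟩
  have hj' : blockMap g j = j' := by simp [blockMap, hy]
  have hback := apply_fst_fst_eq_blockMap hbar hrot j' c b
  rw [← hy, hinv] at hback
  rw [hj', ← hback]

lemma apply_eq_self_of_blockMap_eq (hp : Odd p) (hbar : Commute g (barPerm (Fin r × Fin p)))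
    (hrot : Commute g (rotBlocks r p)) (hinv : Involutive g)
    (hpos : ∀ y, g y ≠ barPerm (Fin r × Fin p) y) {j : Fin r} (hj : blockMap g j = j) :
    g ((j, 0), false) = ((j, 0), false) := by
  obtain ⟨⟨⟨j', c⟩, b⟩, hy⟩ : ∃ y, g ((j, 0), false) = y := ⟨_, rfl⟩
  obtain rfl : j' = j := by simpa [blockMap, hy] using hj
  have hback : g ((j', c), b) = ((j', c + c), false) := by
    cases b
    · rw [apply_eq_rotBlocks_pow hrot, hy, rotBlocks_pow_apply, Fin.cast_val_eq_self]
    · rw [apply_eq_rotBlocks_pow hrot, apply_true_eq_barPerm_apply hbar, hy, barPerm_apply,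
        rotBlocks_pow_apply, Fin.cast_val_eq_self, Bool.not_true]
  rw [← hy, hinv, Prod.ext_iff, Prod.ext_iff] at hback
  obtain rfl : c = 0 := Fin.eq_zero_of_add_self_eq_zero hp hback.1.2.symm
  cases b
  · exact hy
  · exact absurd hy (hpos _)

lemma forall_apply_ne_iff_blockMap_ne (hp : Odd p) (hbar : Commute g (barPerm (Fin r × Fin p)))
    (hrot : Commute g (rotBlocks r p)) (hinv : Involutive g)
    (hpos : ∀ y, g y ≠ barPerm (Fin r × Fin p) y) (j : Fin r) :
    (∀ i, g ((j, i), false) ≠ ((j, i), false)) ↔ blockMap g j ≠ j := by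
  refine ⟨fun h hj ↦ h 0 (apply_eq_self_of_blockMap_eq hp hbar hrot hinv hpos hj),
    fun h i hi ↦ h ?_⟩
  rw [← apply_fst_fst_eq_blockMap hbar hrot j i false, hi]

end blocks

theorem support_orbits_even_general (p s t u : ℕ) (hodd : Odd p)
    (g : Equiv.Perm ((Fin (2 * s + t + u) × Fin p) × Bool))
    (hbar : g ∈ Subgroup.centralizer {barPerm (Fin (2 * s + t + u) × Fin p)})
    (hinv : g * g = 1)
    (hpos : ∀ y, g y ≠ barPerm (Fin (2 * s + t + u) × Fin p) y)
    (hfix : Commute g (rotBlocks (2 * s + t + u) p)) :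
    Even (Finset.univ.filter fun j : Fin (2 * s + t + u) =>
        ∀ i : Fin p, g ((j, i), false) ≠ ((j, i), false)).card := by
  have : NeZero p := ⟨hodd.pos.ne'⟩
  have hbar' : Commute g (barPerm _) := Subgroup.mem_centralizer_singleton_iff.1 hbar
  have hinv' : Involutive g := fun x ↦ DFunLike.congr_fun hinv x
  rw [Finset.filter_congr fun j _ ↦ forall_apply_ne_iff_blockMap_ne hodd hbar' hfix hinv' hpos j]
  exact (blockMap_involutive hbar' hfix hinv').even_card_filter_ne

theorem support_orbits_even (p s t u : ℕ) (hp : p.Prime) (hodd : Odd p)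
    (g : Equiv.Perm ((Fin (2 * s + t + u) × Fin p) × Bool))
    (hbar : g ∈ Subgroup.centralizer {barPerm (Fin (2 * s + t + u) × Fin p)})
    (hinv : g * g = 1)
    (hpos : ∀ y, g y ≠ barPerm (Fin (2 * s + t + u) × Fin p) y)
    (hsupp : (Finset.univ.filter fun i : Fin (2 * s + t + u) × Fin p =>
        g (i, false) ≠ (i, false)).card = 2 * s * p)
    (hfix : Commute g (rotBlocks (2 * s + t + u) p)) :
    Even (Finset.univ.filter fun j : Fin (2 * s + t + u) =>
        ∀ i : Fin p, g ((j, i), false) ≠ ((j, i), false)).card :=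
  support_orbits_even_general p s t u hodd g hbar hinv hpos hfix
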